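/- arXiv:0810.2743 — 2 statements merged into one kernel-verified Lean document; each statement's English description precedes it below -/
import Mathlib

section
/- Let W be a finite Coxeter group, L ⊆ S, x ∈ X_L^♯, and u ∈ W_L. Then D(x) ⊆ D(ux): every left descent of x is a left descent of ux. -/
/-- The left descent set of `w`. -/
def CoxD {B W : Type*} [Group W] {M : CoxeterMatrix B} (cs : CoxeterSystem M W)
    (w : W) : Set B :=
  {s | cs.length (cs.simple s * w) < cs.length w}

/-- The set `X_L = {x : ℓ(sx) > ℓ(x) for all s ∈ L}`. -/
def CoxX {B W : Type*} [Group W] {M : CoxeterMatrix B} (cs : CoxeterSystem M W)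
    (L : Set B) : Set W :=
  {x | ∀ s ∈ L, cs.length (cs.simple s * x) > cs.length x}

/-- `X_L^♯ = {x ∈ X_L : x⁻¹ L x ⊆ S}`. -/
def CoxXsharp {B W : Type*} [Group W] {M : CoxeterMatrix B} (cs : CoxeterSystem M W)
    (L : Set B) : Set W :=
  {x | x ∈ CoxX cs L ∧ ∀ s ∈ L, ∃ t, x⁻¹ * cs.simple s * x = cs.simple t}

/-- The standard parabolic subgroup `W_L`. -/
def CoxParabolic {B W : Type*} [Group W] {M : CoxeterMatrix B} (cs : CoxeterSystem M W)
    (L : Set B) : Subgroup W :=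
  Subgroup.closure (cs.simple '' L)

/-!
Since `x` has no left descent in `L`, lengths add on the coset `W_L x`:
`ℓ(ux) = ℓ(u) + ℓ(x)`. Since `x⁻¹ L x ⊆ S`, conjugating a reduced `L`-word of `u` by `x` gives
a word of the same length, so `ux = xw` with `ℓ(w) ≤ ℓ(u)`. For `s ∈ D(x)` this yields
`ℓ(s u x) = ℓ(s x w) ≤ ℓ(s x) + ℓ(u) < ℓ(x) + ℓ(u) = ℓ(u x)`.

Additivity on cosets and the existence of reduced `L`-words rest on the exchange condition. It
comes from the signed action of `W` on `W × ℤˣ`: acting by the product of a word `ω`, the sign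
records the parity of the number of occurrences of `t` in the right inversion sequence of `ω`,
which therefore depends only on the product of `ω`.
-/

namespace CoxeterSystem

open List

variable {B W : Type*} [Group W] {M : CoxeterMatrix B} (cs : CoxeterSystem M W)

local prefix:100 "s " => cs.simple
local prefix:100 "π " => cs.wordProd
local prefix:100 "ℓ " => cs.length
local prefix:100 "ris " => cs.rightInvSeq

theorem simple_mul_mul_simple_eq_iff (i : B) (t w : W) :
    s i * t * s i = w ↔ t = s i * w * s i := by
  constructor <;> rintro rfl <;> simp [mul_assoc]

section SignedReflectionRepresentation

variable [DecidableEq W]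

def simpleReflPerm (i : B) : Equiv.Perm (W × ℤˣ) :=
  Function.Involutive.toPerm (fun p => (s i * p.1 * s i, if p.1 = s i then -p.2 else p.2)) <| by
    rintro ⟨t, ε⟩
    by_cases ht : t = s i <;> simp [ht, mul_assoc, mul_eq_one_iff_eq_inv]

theorem simpleReflPerm_apply (i : B) (t : W) (ε : ℤˣ) :
    cs.simpleReflPerm i (t, ε) = (s i * t * s i, if t = s i then -ε else ε) :=
  rfl

theorem simpleReflPerm_mul_pow_apply (i j : B) (n : ℕ) (t : W) (ε : ℤˣ) :
    ((cs.simpleReflPerm i * cs.simpleReflPerm j) ^ n) (t, ε) =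
      ((s i * s j) ^ n * t * ((s i * s j) ^ n)⁻¹,
        ε * ∏ e ∈ Finset.range (2 * n), if t = (s j * s i) ^ e * s j then -1 else 1) := by
  induction n generalizing t ε with
  | zero => simp
  | succ n ih =>
    have hconj : ∀ e : ℕ, s i * (s j * t * s j) * s i = (s j * s i) ^ e * s j ↔
        t = (s j * s i) ^ (e + 2) * s j := by
      intro e
      rw [simple_mul_mul_simple_eq_iff, simple_mul_mul_simple_eq_iff,
        show e + 2 = 1 + e + 1 by ring, pow_succ, pow_add, pow_one]
      simp only [mul_assoc]
    rw [pow_succ, Equiv.Perm.mul_apply, Equiv.Perm.mul_apply, simpleReflPerm_apply,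
      simpleReflPerm_apply, ih, Prod.mk.injEq]
    constructor
    · simp only [pow_succ, mul_inv_rev, inv_simple, mul_assoc]
    · rw [show 2 * (n + 1) = 2 * n + 1 + 1 by ring, Finset.prod_range_succ',
        Finset.prod_range_succ']
      simp only [hconj, simple_mul_mul_simple_eq_iff, zero_add, pow_one, pow_zero, one_mul]
      split_ifs <;> simp [mul_comm]

theorem isLiftable_simpleReflPerm : M.IsLiftable cs.simpleReflPerm := by
  intro i j
  have hperiod : (s j * s i) ^ M i j = 1 := by
    rw [M.symmetric]
    exact cs.simple_mul_simple_pow j i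
  ext ⟨t, ε⟩ : 1
  -- `(s j * s i) ^ e * s j` is `M i j`-periodic in `e`, so every sign factor occurs twice
  rw [simpleReflPerm_mul_pow_apply, cs.simple_mul_simple_pow, Equiv.Perm.one_apply, two_mul,
    Finset.prod_range_add]
  simp only [pow_add, hperiod, one_mul, Int.units_mul_self, mul_one, inv_one]

def signedReflRep : W →* Equiv.Perm (W × ℤˣ) :=
  cs.lift ⟨cs.simpleReflPerm, cs.isLiftable_simpleReflPerm⟩

theorem signedReflRep_wordProd (ω : List B) (t : W) (ε : ℤˣ) :
    cs.signedReflRep (π ω) (t, ε) =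
      (π ω * t * (π ω)⁻¹, ε * (-1) ^ (ris ω).count t) := by
  induction ω generalizing t ε with
  | nil => simp
  | cons i ω ih =>
    have hcond : (π ω)⁻¹ * s i * π ω = t ↔ π ω * t * (π ω)⁻¹ = s i := by
      constructor
      · rintro rfl
        simp [mul_assoc]
      · rintro h
        simp [← h, mul_assoc]
    rw [wordProd_cons, map_mul, Equiv.Perm.mul_apply, ih, signedReflRep,
      cs.lift_apply_simple, simpleReflPerm_apply, rightInvSeq, count_cons]
    simp only [beq_iff_eq, hcond]
    simp only [mul_inv_rev, inv_simple, mul_assoc, pow_add]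
    split_ifs <;> simp

theorem neg_one_pow_count_rightInvSeq_congr {ω ω' : List B} (h : π ω = π ω') (t : W) :
    (-1 : ℤˣ) ^ (ris ω).count t = (-1) ^ (ris ω').count t := by
  have hω := cs.signedReflRep_wordProd ω t 1
  rw [h, cs.signedReflRep_wordProd ω' t 1] at hω
  simpa using (congrArg Prod.snd hω).symm

end SignedReflectionRepresentation

theorem simple_mem_rightInvSeq_of_isRightDescent {ω : List B} {i : B}
    (h : cs.IsRightDescent (π ω) i) : s i ∈ ris ω := by
  classical
  obtain ⟨ψ, hψ, hψω⟩ := cs.exists_isReduced (π ω * s i)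
  have hπ : π (ψ.concat i) = π ω := by
    rw [wordProd_concat, ← hψω, simple_mul_simple_cancel_right]
  have hred : cs.IsReduced (ψ.concat i) := by
    rw [IsReduced, hπ, length_concat, ← hψ.eq, ← hψω, (cs.isRightDescent_iff).mp h]
  have hcount : (ris (ψ.concat i)).count (s i) = 1 :=
    count_eq_one_of_mem hred.nodup_rightInvSeq (by rw [rightInvSeq_concat]; simp)
  by_contra hnot
  have hsign := cs.neg_one_pow_count_rightInvSeq_congr hπ (s i)
  rw [hcount, count_eq_zero.mpr hnot] at hsign
  simp at hsign

theorem exists_wordProd_eraseIdx_eq_simple_mul {ω : List B} {i : B}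
    (h : cs.IsLeftDescent (π ω) i) : ∃ j < ω.length, π (ω.eraseIdx j) = s i * π ω := by
  have hrev : cs.IsRightDescent (π ω.reverse) i := by
    rwa [wordProd_reverse, isRightDescent_inv_iff]
  have hmem := cs.simple_mem_rightInvSeq_of_isRightDescent hrev
  rw [rightInvSeq_reverse, mem_reverse] at hmem
  obtain ⟨j, hj, hget⟩ := getElem_of_mem hmem
  rw [length_leftInvSeq] at hj
  exact ⟨j, hj, by rw [← getD_leftInvSeq_mul_wordProd, getD_eq_getElem _ _ (by simpa), hget]⟩

section Parabolic

variable {L : Set B}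

theorem wordProd_mem_closure {ω : List B} (hω : ∀ i ∈ ω, i ∈ L) :
    π ω ∈ Subgroup.closure (cs.simple '' L) := by
  induction ω with
  | nil => exact one_mem _
  | cons i ω ih =>
    rw [wordProd_cons]
    exact mul_mem (Subgroup.subset_closure (Set.mem_image_of_mem _ (hω i mem_cons_self)))
      (ih fun j hj => hω j (mem_cons_of_mem _ hj))

theorem exists_word_of_mem_closure {u : W} (hu : u ∈ Subgroup.closure (cs.simple '' L)) :
    ∃ ω : List B, (∀ i ∈ ω, i ∈ L) ∧ π ω = u := by
  induction hu using Subgroup.closure_induction with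
  | mem w hw =>
    obtain ⟨i, hi, rfl⟩ := hw
    exact ⟨[i], by simpa using hi, by simp⟩
  | one => exact ⟨[], by simp, rfl⟩
  | mul a b _ _ iha ihb =>
    obtain ⟨α, hαL, rfl⟩ := iha
    obtain ⟨β, hβL, rfl⟩ := ihb
    exact ⟨α ++ β, by simpa [or_imp, forall_and] using And.intro hαL hβL, wordProd_append ..⟩
  | inv a _ iha =>
    obtain ⟨α, hαL, rfl⟩ := iha
    exact ⟨α.reverse, by simpa using hαL, wordProd_reverse ..⟩

theorem exists_reduced_sublist (ω : List B) :
    ∃ ω', ω' <+ ω ∧ cs.IsReduced ω' ∧ π ω' = π ω := by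
  induction ω with
  | nil => exact ⟨[], Sublist.refl _, by simp [IsReduced], rfl⟩
  | cons i ω ih =>
    obtain ⟨ω', hsub, hred, hπ⟩ := ih
    by_cases hd : cs.IsLeftDescent (π ω') i
    · obtain ⟨j, hj, hj'⟩ := cs.exists_wordProd_eraseIdx_eq_simple_mul hd
      refine ⟨ω'.eraseIdx j, ((eraseIdx_sublist _ _).trans hsub).cons i, ?_,
        by rw [hj', hπ, wordProd_cons]⟩
      have hlen := (cs.isLeftDescent_iff).mp hd
      rw [hred.eq] at hlen
      rw [IsReduced, hj', length_eraseIdx_of_lt hj]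
      omega
    · refine ⟨i :: ω', hsub.cons_cons i, ?_, by rw [wordProd_cons, wordProd_cons, hπ]⟩
      rw [IsReduced, wordProd_cons, length_cons, (cs.not_isLeftDescent_iff).mp hd, hred.eq]

theorem exists_reduced_word_of_mem_closure {u : W}
    (hu : u ∈ Subgroup.closure (cs.simple '' L)) :
    ∃ ω : List B, (∀ i ∈ ω, i ∈ L) ∧ cs.IsReduced ω ∧ π ω = u := by
  obtain ⟨ω, hωL, rfl⟩ := cs.exists_word_of_mem_closure hu
  obtain ⟨ω', hsub, hred, hπ⟩ := cs.exists_reduced_sublist ω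
  exact ⟨ω', fun i hi => hωL i (hsub.subset hi), hred, hπ⟩

theorem exists_mem_isLeftDescent_of_mem_closure {u : W}
    (hu : u ∈ Subgroup.closure (cs.simple '' L)) (hu₁ : u ≠ 1) :
    ∃ i ∈ L, cs.IsLeftDescent u i := by
  obtain ⟨ω, hωL, hω, rfl⟩ := cs.exists_reduced_word_of_mem_closure hu
  cases ω with
  | nil => exact absurd rfl hu₁
  | cons i ω =>
    refine ⟨i, hωL i mem_cons_self, ?_⟩
    rw [IsLeftDescent, wordProd_cons, simple_mul_simple_cancel_left, ← wordProd_cons, hω.eq]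
    exact (cs.length_wordProd_le ω).trans_lt (by simp)

theorem length_mul_eq_add_of_forall_le_length_mul {y : W}
    (hmin : ∀ v ∈ Subgroup.closure (cs.simple '' L), ℓ y ≤ ℓ (v * y)) {u : W}
    (hu : u ∈ Subgroup.closure (cs.simple '' L)) : ℓ (u * y) = ℓ u + ℓ y := by
  obtain ⟨ω, hωL, hω, rfl⟩ := cs.exists_reduced_word_of_mem_closure hu
  rw [hω.eq]
  clear hu
  induction ω with
  | nil => simp
  | cons i ω ih =>
    have hω' : cs.IsReduced ω := by simpa using hω.drop 1
    have hωL' : ∀ j ∈ ω, j ∈ L := fun j hj => hωL j (mem_cons_of_mem _ hj)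
    rw [wordProd_cons, mul_assoc, length_cons]
    refine (cs.not_isLeftDescent_iff.mp fun hd => ?_).trans (by rw [ih hωL' hω']; ring)
    obtain ⟨ξ, hξ, rfl⟩ := cs.exists_isReduced y
    rw [← wordProd_append] at hd
    obtain ⟨j, hj, hj'⟩ := cs.exists_wordProd_eraseIdx_eq_simple_mul hd
    rw [length_append] at hj
    rcases lt_or_ge j ω.length with hjω | hjω
    -- the exchanged letter lies in `ω`: then `i :: ω` is not reduced
    · rw [eraseIdx_append_of_lt_length hjω, wordProd_append, wordProd_append, ← mul_assoc]
        at hj'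
      have hshorter := cs.length_wordProd_le (ω.eraseIdx j)
      rw [mul_right_cancel hj', ← wordProd_cons, hω.eq, length_eraseIdx_of_lt hjω,
        length_cons] at hshorter
      omega
    -- it lies in `ξ`: then `((π ω)⁻¹ * s i * π ω) * π ξ` is a shorter element of the coset
    · rw [eraseIdx_append_of_length_le hjω, wordProd_append, wordProd_append] at hj'
      have hv : (π ω)⁻¹ * s i * π ω ∈ Subgroup.closure (cs.simple '' L) :=
        mul_mem (mul_mem (inv_mem (cs.wordProd_mem_closure hωL'))
          (Subgroup.subset_closure (Set.mem_image_of_mem _ (hωL i mem_cons_self))))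
          (cs.wordProd_mem_closure hωL')
      have hle := hmin _ hv
      rw [mul_assoc, mul_assoc, ← hj', inv_mul_cancel_left, hξ.eq] at hle
      have hshorter := cs.length_wordProd_le (ξ.eraseIdx (j - ω.length))
      rw [length_eraseIdx_of_lt (by omega)] at hshorter
      omega

theorem length_mul_eq_add_of_forall_length_lt {x : W} (hx : ∀ i ∈ L, ℓ x < ℓ (s i * x))
    {u : W} (hu : u ∈ Subgroup.closure (cs.simple '' L)) : ℓ (u * x) = ℓ u + ℓ x := by
  obtain ⟨_, ⟨v, hv, rfl⟩, hmin⟩ := (InvImage.wf cs.length wellFounded_lt).has_min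
    {y | ∃ v ∈ Subgroup.closure (cs.simple '' L), v * x = y} ⟨x, 1, one_mem _, one_mul x⟩
  have hmin' : ∀ w ∈ Subgroup.closure (cs.simple '' L), ℓ (v * x) ≤ ℓ (w * (v * x)) :=
    fun w hw => not_lt.mp (hmin _ ⟨w * v, mul_mem hw hv, mul_assoc ..⟩)
  -- a left descent `s i ∈ L` of `v⁻¹` would be one of `x = v⁻¹ * (v * x)`
  suffices hv₁ : v = 1 by
    rw [hv₁, one_mul] at hmin'
    exact cs.length_mul_eq_add_of_forall_le_length_mul hmin' hu
  by_contra hv₁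
  obtain ⟨i, hiL, hi⟩ :=
    cs.exists_mem_isLeftDescent_of_mem_closure (inv_mem hv) (inv_ne_one.mpr hv₁)
  have hsv : s i * v⁻¹ ∈ Subgroup.closure (cs.simple '' L) :=
    mul_mem (Subgroup.subset_closure (Set.mem_image_of_mem _ hiL)) (inv_mem hv)
  have hx' : ℓ (v⁻¹ * (v * x)) < ℓ (s i * v⁻¹ * (v * x)) := by
    simpa [mul_assoc] using hx i hiL
  rw [cs.length_mul_eq_add_of_forall_le_length_mul hmin' hsv,
    cs.length_mul_eq_add_of_forall_le_length_mul hmin' (inv_mem hv)] at hx'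
  unfold IsLeftDescent at hi
  omega

theorem length_inv_mul_mul_le {x : W} (hx : ∀ i ∈ L, ∃ t, x⁻¹ * s i * x = s t) {u : W}
    (hu : u ∈ Subgroup.closure (cs.simple '' L)) : ℓ (x⁻¹ * u * x) ≤ ℓ u := by
  obtain ⟨ω, hωL, hω, rfl⟩ := cs.exists_reduced_word_of_mem_closure hu
  rw [hω.eq]
  clear hu hω
  induction ω with
  | nil => simp
  | cons i ω ih =>
    obtain ⟨t, ht⟩ := hx i (hωL i mem_cons_self)
    calc ℓ (x⁻¹ * π (i :: ω) * x) = ℓ (s t * (x⁻¹ * π ω * x)) := by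
          rw [← ht, wordProd_cons]; group
      _ ≤ ℓ (s t) + ℓ (x⁻¹ * π ω * x) := cs.length_mul_le _ _
      _ ≤ (i :: ω).length := by
          rw [length_simple, length_cons, add_comm]
          exact Nat.add_le_add_right (ih fun j hj => hωL j (mem_cons_of_mem _ hj)) 1

end Parabolic

end CoxeterSystem

theorem stmt12_general {B W : Type*} [Group W]
    {M : CoxeterMatrix B} (cs : CoxeterSystem M W) (L : Set B) (x u : W)
    (hx : x ∈ CoxXsharp cs L) (hu : u ∈ CoxParabolic cs L) :
    CoxD cs x ⊆ CoxD cs (u * x) := by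
  obtain ⟨hxX, hxS⟩ := hx
  intro b (hb : cs.length (cs.simple b * x) < cs.length x)
  show cs.length (cs.simple b * (u * x)) < cs.length (u * x)
  calc cs.length (cs.simple b * (u * x))
      = cs.length (cs.simple b * x * (x⁻¹ * u * x)) := by group
    _ ≤ cs.length (cs.simple b * x) + cs.length (x⁻¹ * u * x) := cs.length_mul_le _ _
    _ < cs.length u + cs.length x := by
        have := cs.length_inv_mul_mul_le hxS hu
        omega
    _ = cs.length (u * x) := (cs.length_mul_eq_add_of_forall_length_lt hxX hu).symm

/-- If `x ∈ X_L^♯` and `u ∈ W_L` then `D(x) ⊆ D(ux)`. -/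
theorem stmt12 {B W : Type*} [Fintype B] [Group W] [Fintype W]
    {M : CoxeterMatrix B} (cs : CoxeterSystem M W) (L : Set B) (x u : W)
    (hx : x ∈ CoxXsharp cs L) (hu : u ∈ CoxParabolic cs L) :
    CoxD cs x ⊆ CoxD cs (u * x) :=
  stmt12_general cs L x u hx hu
end

section
/- Let W be a finite Coxeter group, L ⊆ S, d ∈ X_L^♯ and u ∈ W_L. Then ℓ(d⁻¹ u d) = ℓ(u); that is, conjugation by d ∈ X_L^♯ preserves the length of elements of W_L. -/
namespace CoxeterSystem

variable {B W : Type*} [Group W] {M : CoxeterMatrix B} (cs : CoxeterSystem M W)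

local prefix:100 "s" => cs.simple
local prefix:100 "π" => cs.wordProd
local prefix:100 "ℓ" => cs.length
local prefix:100 "ris " => cs.rightInvSeq

theorem alternatingWord_two_mul_succ (i j : B) (m : ℕ) :
    alternatingWord i j (2 * (m + 1)) = i :: j :: alternatingWord i j (2 * m) := by
  rw [show 2 * (m + 1) = 2 * m + 1 + 1 by ring, alternatingWord_succ', alternatingWord_succ']
  simp

theorem wordProd_alternatingWord_two_mul (i j : B) (m : ℕ) :
    π (alternatingWord i j (2 * m)) = (s i * s j) ^ m := by
  simp [prod_alternatingWord_eq_mul_pow]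

theorem inv_pow_mul_simple (i j : B) (m : ℕ) :
    ((s i * s j) ^ m)⁻¹ * s j = s j * (s i * s j) ^ m := by
  have h : s j * (s i * s j) * (s j)⁻¹ = (s i * s j)⁻¹ := by
    simp [mul_assoc, inv_simple]
  rw [← inv_pow, ← h, conj_pow, inv_simple, mul_assoc, simple_mul_simple_self, mul_one]

theorem rightInvSeq_alternatingWord (i j : B) (m : ℕ) :
    ris (alternatingWord i j (2 * m)) =
      ((List.range (2 * m)).map fun l ↦ s j * (s i * s j) ^ l).reverse := by
  induction m with
  | zero => simp [alternatingWord]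
  | succ m ih =>
    rw [alternatingWord_two_mul_succ, show 2 * (m + 1) = 2 * m + 1 + 1 by ring,
      List.range_succ, List.range_succ]
    simp only [rightInvSeq, wordProd_cons, wordProd_alternatingWord_two_mul, ih, List.map_append,
      List.reverse_append, List.map_cons, List.map_nil, List.reverse_cons, List.reverse_nil,
      List.nil_append, List.cons_append]
    have heven : ((s i * s j) ^ m)⁻¹ * s j * (s i * s j) ^ m = s j * (s i * s j) ^ (2 * m) := by
      rw [inv_pow_mul_simple, mul_assoc, ← pow_add, ← two_mul]
    have hodd : (s j * (s i * s j) ^ m)⁻¹ * s i * (s j * (s i * s j) ^ m) =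
        s j * (s i * s j) ^ (2 * m + 1) := by
      rw [mul_inv_rev, inv_simple, ← mul_assoc, mul_assoc _ (s i), inv_pow_mul_simple,
        mul_assoc, mul_assoc, ← pow_succ', ← pow_add, ← add_assoc, ← two_mul]
    rw [heven, hodd]

theorem prod_map_alternatingWord {G : Type*} [Monoid G] (f : B → G) (i j : B) (m : ℕ) :
    ((alternatingWord i j (2 * m)).map f).prod = (f i * f j) ^ m := by
  induction m with
  | zero => simp [alternatingWord]
  | succ m ih => simp [alternatingWord_two_mul_succ, ih, pow_succ', mul_assoc]

section ParityRepresentation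

variable [DecidableEq W]

def parityPerm (i : B) : Equiv.Perm (W × Bool) :=
  Function.Involutive.toPerm (fun x ↦ (s i * x.1 * s i, xor x.2 (decide (x.1 = s i)))) <| by
    rintro ⟨t, ε⟩
    simp [mul_assoc, mul_eq_one_iff_eq_inv]

theorem parityPerm_apply (i : B) (t : W) (ε : Bool) :
    cs.parityPerm i (t, ε) = (s i * t * s i, xor ε (decide (t = s i))) := rfl

theorem prod_map_parityPerm_apply (ω : List B) (t : W) (ε : Bool) :
    (ω.map cs.parityPerm).prod (t, ε) = (π ω * t * (π ω)⁻¹, xor ε ((ris ω).count t).bodd) := by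
  induction ω with
  | nil => simp
  | cons i ω ih =>
    have hflip : π ω * t * (π ω)⁻¹ = s i ↔ (π ω)⁻¹ * s i * π ω = t := by
      constructor <;> intro h <;> rw [← h] <;> group
    simp only [List.map_cons, List.prod_cons, Equiv.Perm.mul_apply, ih, parityPerm_apply,
      rightInvSeq, wordProd_cons, List.count_cons, hflip, Prod.mk.injEq]
    refine ⟨by simp only [mul_inv_rev, inv_simple, mul_assoc], ?_⟩
    by_cases h : (π ω)⁻¹ * s i * π ω = t <;> simp [h]

theorem isLiftable_parityPerm : M.IsLiftable cs.parityPerm := by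
  intro i j
  have hp : (s i * s j) ^ M i j = 1 := cs.simple_mul_simple_pow i j
  ext ⟨t, ε⟩ : 1
  rw [← prod_map_alternatingWord, prod_map_parityPerm_apply, wordProd_alternatingWord_two_mul, hp,
    rightInvSeq_alternatingWord, List.count_reverse, two_mul, List.range_add, List.map_append,
    List.map_map]
  have hperiod : ((fun l ↦ s j * (s i * s j) ^ l) ∘ fun l ↦ M i j + l) =
      fun l ↦ s j * (s i * s j) ^ l := by
    funext l; simp [pow_add, hp]
  simp [hperiod, List.count_append, Nat.bodd_add]

def parityRep : W →* Equiv.Perm (W × Bool) :=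
  cs.lift ⟨cs.parityPerm, cs.isLiftable_parityPerm⟩

theorem parityRep_wordProd (ω : List B) : cs.parityRep (π ω) = (ω.map cs.parityPerm).prod := by
  rw [wordProd, map_list_prod, List.map_map]
  congr 2
  funext i
  exact cs.lift_apply_simple cs.isLiftable_parityPerm i

theorem bodd_count_rightInvSeq_eq_of_wordProd_eq {ω ω' : List B} (h : π ω = π ω') (t : W) :
    ((ris ω).count t).bodd = ((ris ω').count t).bodd := by
  have := congrArg (fun w ↦ (cs.parityRep w (t, false)).2) h
  simpa only [parityRep_wordProd, prod_map_parityPerm_apply, Bool.false_xor] using this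

end ParityRepresentation

theorem simple_mem_rightInvSeq_of_length_mul_simple_lt {ω : List B} {i : B}
    (hi : ℓ (π ω * s i) < ℓ (π ω)) : s i ∈ ris ω := by
  classical
  obtain ⟨ω', hω', hω'_eq⟩ := cs.exists_isReduced (π ω * s i)
  have hnot : s i ∉ ris ω' := fun hmem ↦ by
    have := (cs.isRightInversion_of_mem_rightInvSeq hω' hmem).2
    rw [← hω'_eq, simple_mul_simple_cancel_right] at this
    exact lt_asymm this hi
  have hconcat : π (ω'.concat i) = π ω := by
    rw [wordProd_concat, ← hω'_eq, simple_mul_simple_cancel_right]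
  have hcount : (ris (ω'.concat i)).count (s i) = 1 := by
    have hfix : MulAut.conj (s i) (s i) = s i := by simp [inv_simple]
    have hmap := List.count_map_of_injective (ris ω') _ (MulAut.conj (s i)).injective (s i)
    rw [hfix] at hmap
    rw [rightInvSeq_concat, List.concat_eq_append, List.count_append, hmap,
      List.count_eq_zero.mpr hnot, List.count_singleton_self]
  have hodd := cs.bodd_count_rightInvSeq_eq_of_wordProd_eq hconcat (s i)
  rw [hcount] at hodd
  refine List.count_pos_iff.mp (Nat.pos_of_ne_zero fun h0 ↦ ?_)
  simp [h0] at hodd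

theorem exists_eraseIdx_of_length_mul_simple_lt {ω : List B} {i : B}
    (hi : ℓ (π ω * s i) < ℓ (π ω)) : ∃ j < ω.length, π ω * s i = π (ω.eraseIdx j) := by
  obtain ⟨j, hj, hget⟩ :=
    List.mem_iff_getElem.mp (cs.simple_mem_rightInvSeq_of_length_mul_simple_lt hi)
  rw [length_rightInvSeq] at hj
  refine ⟨j, hj, ?_⟩
  rw [← wordProd_mul_getD_rightInvSeq, List.getD_eq_getElem _ 1 (by simpa using hj), hget]

theorem exists_isReduced_sublist (ω : List B) :
    ∃ ω' : List B, ω'.Sublist ω ∧ cs.IsReduced ω' ∧ π ω' = π ω := by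
  induction ω using List.reverseRecOn with
  | nil => exact ⟨[], List.Sublist.refl _, by simp [IsReduced], rfl⟩
  | append_singleton ω i ih =>
    obtain ⟨ω', hsub, hred, hprod⟩ := ih
    have hprod_i : π (ω ++ [i]) = π ω' * s i := by rw [wordProd_append, wordProd_singleton, hprod]
    rcases cs.length_mul_simple (π ω') i with hlong | hshort
    · refine ⟨ω' ++ [i], hsub.append (List.Sublist.refl _), ?_,
        by rw [hprod_i, wordProd_append, wordProd_singleton]⟩
      rw [IsReduced, wordProd_append, wordProd_singleton, hlong, hred, List.length_append,
        List.length_singleton]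
    · obtain ⟨j, hj, hdel⟩ :=
        cs.exists_eraseIdx_of_length_mul_simple_lt (ω := ω') (i := i) (by omega)
      refine ⟨ω'.eraseIdx j,
        (List.eraseIdx_sublist _ _).trans (hsub.trans (List.sublist_append_left _ _)), ?_,
        by rw [hprod_i, hdel]⟩
      rw [IsReduced, ← hdel, List.length_eraseIdx_of_lt hj, ← hred]
      omega

theorem exists_wordProd_eq_of_mem_coxParabolic {L : Set B} {u : W}
    (hu : u ∈ CoxParabolic cs L) :
    ∃ ω : List B, (∀ i ∈ ω, i ∈ L) ∧ π ω = u := by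
  induction hu using Subgroup.closure_induction with
  | mem x hx =>
    obtain ⟨i, hi, rfl⟩ := hx
    exact ⟨[i], by simpa using hi, cs.wordProd_singleton i⟩
  | one => exact ⟨[], by simp, cs.wordProd_nil⟩
  | mul a b _ _ iha ihb =>
    obtain ⟨ω₁, h₁, rfl⟩ := iha
    obtain ⟨ω₂, h₂, rfl⟩ := ihb
    refine ⟨ω₁ ++ ω₂, fun i hi ↦ ?_, cs.wordProd_append ω₁ ω₂⟩
    rcases List.mem_append.mp hi with h | h
    exacts [h₁ i h, h₂ i h]
  | inv a _ iha =>
    obtain ⟨ω, h, rfl⟩ := iha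
    exact ⟨ω.reverse, fun i hi ↦ h i (List.mem_reverse.mp hi), cs.wordProd_reverse ω⟩

theorem exists_isReduced_of_mem_coxParabolic {L : Set B} {u : W}
    (hu : u ∈ CoxParabolic cs L) :
    ∃ ω : List B, (∀ i ∈ ω, i ∈ L) ∧ cs.IsReduced ω ∧ π ω = u := by
  obtain ⟨ω, hL, rfl⟩ := cs.exists_wordProd_eq_of_mem_coxParabolic hu
  obtain ⟨ω', hsub, hred, hprod⟩ := cs.exists_isReduced_sublist ω
  exact ⟨ω', fun i hi ↦ hL i (hsub.subset hi), hred, hprod⟩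

section Conjugation

variable {L : Set B} {d : W}

theorem length_conj_wordProd_le (hd : ∀ i ∈ L, ∃ j, d⁻¹ * s i * d = s j) {ω : List B}
    (hω : ∀ i ∈ ω, i ∈ L) :
    ℓ (d⁻¹ * π ω * d) ≤ ω.length := by
  induction ω with
  | nil => simp
  | cons i ω ih =>
    obtain ⟨j, hj⟩ := hd i (hω i List.mem_cons_self)
    have hsplit : d⁻¹ * π (i :: ω) * d = s j * (d⁻¹ * π ω * d) := by
      rw [wordProd_cons, ← hj]; group
    calc ℓ (d⁻¹ * π (i :: ω) * d) ≤ ℓ (s j) + ℓ (d⁻¹ * π ω * d) := hsplit ▸ cs.length_mul_le _ _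
      _ ≤ (i :: ω).length := by
        rw [length_simple, List.length_cons]
        have := ih fun k hk ↦ hω k (List.mem_cons_of_mem i hk)
        omega

theorem length_conj_le (hd : ∀ i ∈ L, ∃ j, d⁻¹ * s i * d = s j) {u : W}
    (hu : u ∈ CoxParabolic cs L) : ℓ (d⁻¹ * u * d) ≤ ℓ u := by
  obtain ⟨ω, hL, hred, rfl⟩ := cs.exists_isReduced_of_mem_coxParabolic hu
  exact hred ▸ cs.length_conj_wordProd_le hd hL

theorem conj_mem_coxParabolic (hd : ∀ i ∈ L, ∃ j, d⁻¹ * s i * d = s j) {u : W}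
    (hu : u ∈ CoxParabolic cs L) :
    d⁻¹ * u * d ∈ CoxParabolic cs {j | ∃ i ∈ L, d⁻¹ * s i * d = s j} := by
  induction hu using Subgroup.closure_induction with
  | mem x hx =>
    obtain ⟨i, hi, rfl⟩ := hx
    obtain ⟨j, hj⟩ := hd i hi
    exact hj ▸ Subgroup.subset_closure ⟨j, ⟨i, hi, hj⟩, rfl⟩
  | one => simp
  | mul a b _ _ ha hb =>
    have hsplit : d⁻¹ * (a * b) * d = (d⁻¹ * a * d) * (d⁻¹ * b * d) := by group
    exact hsplit ▸ mul_mem ha hb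
  | inv a _ ha =>
    have hinv : d⁻¹ * a⁻¹ * d = (d⁻¹ * a * d)⁻¹ := by group
    exact hinv ▸ inv_mem ha

theorem length_conj_eq (hd : ∀ i ∈ L, ∃ j, d⁻¹ * s i * d = s j) {u : W}
    (hu : u ∈ CoxParabolic cs L) : ℓ (d⁻¹ * u * d) = ℓ u := by
  refine le_antisymm (cs.length_conj_le hd hu) ?_
  have hd' : ∀ j ∈ {j | ∃ i ∈ L, d⁻¹ * s i * d = s j}, ∃ i, d⁻¹⁻¹ * s j * d⁻¹ = s i := by
    rintro j ⟨i, -, hij⟩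
    exact ⟨i, by rw [← hij]; group⟩
  simpa [mul_assoc] using cs.length_conj_le hd' (cs.conj_mem_coxParabolic hd hu)

end Conjugation

end CoxeterSystem

theorem stmt14_general {B W : Type*} [Group W]
    {M : CoxeterMatrix B} (cs : CoxeterSystem M W) (L : Set B) (d u : W)
    (hd : d ∈ CoxXsharp cs L) (hu : u ∈ CoxParabolic cs L) :
    cs.length (d⁻¹ * u * d) = cs.length u :=
  cs.length_conj_eq hd.2 hu

/-- Conjugation by `d ∈ X_L^♯` preserves the length of elements of `W_L`. -/
theorem stmt14 {B W : Type*} [Fintype B] [Group W] [Fintype W]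
    {M : CoxeterMatrix B} (cs : CoxeterSystem M W) (L : Set B) (d u : W)
    (hd : d ∈ CoxXsharp cs L) (hu : u ∈ CoxParabolic cs L) :
    cs.length (d⁻¹ * u * d) = cs.length u :=
  stmt14_general cs L d u hd hu
end
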